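/- arXiv:math/0610266 — 6 statements merged into one kernel-verified Lean document; each statement's English description precedes it below -/
import Mathlib

section
/- Suppose u ∈ Ḣ¹(ℝ^N) satisfies ‖∇u‖² < ‖∇W‖² and E(u) ≤ (1−δ₀)E(W) for some δ₀ > 0. Then there exists δ̄ = δ̄(δ₀, N) > 0 such that ∫|∇u|² ≤ (1−δ̄)∫|∇W|². -/
open MeasureTheory

/-! The Sobolev inequality gives `‖u‖_{2*}^{2*} ≤ C^{2*} ‖∇u‖₂^{2*}`, and below the threshold
`‖∇u‖₂² < C^{-N}` the factor `C^{2*} ‖∇u‖₂^{2*-2}` is at most `1`; hence `∫|u|^{2*} ≤ ∫|∇u|²`.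
Then `E(u) ≥ (1/2 - 1/2*) ∫|∇u|² = (1/N) ∫|∇u|²`, and the energy bound yields the claim
with `δ̄ = δ₀`. -/

theorem le_of_rpow_le_mul_sqrt_of_le_rpow_neg {m y C n : ℝ} (hm : 0 ≤ m) (hy : 0 ≤ y)
    (hC : 0 < C) (hn : 2 < n) (hS : m ^ ((n - 2) / (2 * n)) ≤ C * y ^ ((1 : ℝ) / 2))
    (hyC : y ≤ C ^ (-n)) : m ≤ y := by
  have hn0 : 0 < n := by linarith
  have ha : 0 < (n - 2) / (2 * n) := div_pos (by linarith) (by positivity)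
  have hsplit : y ^ ((1 : ℝ) / 2) = y ^ (1 / n) * y ^ ((n - 2) / (2 * n)) := by
    have hexp : 1 / n + (n - 2) / (2 * n) = 1 / 2 := by field_simp; ring
    rw [← Real.rpow_add' hy (by rw [hexp]; norm_num), hexp]
  have hsmall : C * y ^ (1 / n) ≤ 1 := calc
    C * y ^ (1 / n) ≤ C * (C ^ (-n)) ^ (1 / n) := by gcongr
    _ = 1 := by
      rw [← Real.rpow_mul hC.le, neg_mul, mul_one_div_cancel hn0.ne', Real.rpow_neg_one,
        mul_inv_cancel₀ hC.ne']
  have hpow : m ^ ((n - 2) / (2 * n)) ≤ y ^ ((n - 2) / (2 * n)) := calc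
    m ^ ((n - 2) / (2 * n)) ≤ C * y ^ ((1 : ℝ) / 2) := hS
    _ = (C * y ^ (1 / n)) * y ^ ((n - 2) / (2 * n)) := by rw [hsplit, mul_assoc]
    _ ≤ y ^ ((n - 2) / (2 * n)) :=
      mul_le_of_le_one_left (Real.rpow_nonneg hy _) hsmall
  exact (Real.rpow_le_rpow_iff hm hy ha).mp hpow

theorem div_le_half_sub_mul_of_le {m y n : ℝ} (hn : 2 ≤ n) (hmy : m ≤ y) :
    y / n ≤ 1 / 2 * y - (n - 2) / (2 * n) * m := by
  have hn0 : 0 < n := by linarith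
  have ha : 0 ≤ (n - 2) / (2 * n) := div_nonneg (by linarith) (by positivity)
  calc y / n = 1 / 2 * y - (n - 2) / (2 * n) * y := by field_simp; ring
    _ ≤ 1 / 2 * y - (n - 2) / (2 * n) * m := by gcongr

/-- If `u ∈ Ḣ¹(ℝ^N)` satisfies the Sobolev inequality with best constant `C`,
`‖∇u‖² < ‖∇W‖² = C^{-N}` and `E(u) ≤ (1−δ₀)E(W) = (1−δ₀)(1/N)C^{-N}`, then there exists
`δ̄ = δ̄(δ₀, N) > 0` such that `∫|∇u|² ≤ (1−δ̄)∫|∇W|²`. -/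
theorem stmt5 (N : ℕ) (hN : 3 ≤ N) (C : ℝ) (hC : 0 < C) (δ₀ : ℝ) (hδ₀ : 0 < δ₀) :
    ∃ δb > (0 : ℝ), ∀ u : EuclideanSpace ℝ (Fin N) → ℝ,
      (∫ x, |u x| ^ ((2 * (N : ℝ)) / ((N : ℝ) - 2))) ^ (((N : ℝ) - 2) / (2 * (N : ℝ)))
          ≤ C * (∫ x, ‖gradient u x‖ ^ 2) ^ ((1 : ℝ) / 2) →
      (∫ x, ‖gradient u x‖ ^ 2) < C ^ (-(N : ℝ)) →
      (1 / 2) * (∫ x, ‖gradient u x‖ ^ 2)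
          - (((N : ℝ) - 2) / (2 * (N : ℝ))) * (∫ x, |u x| ^ ((2 * (N : ℝ)) / ((N : ℝ) - 2)))
        ≤ (1 - δ₀) * ((1 / (N : ℝ)) * C ^ (-(N : ℝ))) →
      (∫ x, ‖gradient u x‖ ^ 2) ≤ (1 - δb) * C ^ (-(N : ℝ)) := by
  refine ⟨δ₀, hδ₀, fun u hS hlt hE => ?_⟩
  have hN2 : (2 : ℝ) < N := by exact_mod_cast hN
  have hgrad : 0 ≤ ∫ x, ‖gradient u x‖ ^ 2 := integral_nonneg fun x => by positivity
  have hcrit : 0 ≤ ∫ x, |u x| ^ ((2 * (N : ℝ)) / ((N : ℝ) - 2)) :=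
    integral_nonneg fun x => Real.rpow_nonneg (abs_nonneg _) _
  have hcrit_le := le_of_rpow_le_mul_sqrt_of_le_rpow_neg hcrit hgrad hC hN2 hS hlt.le
  have hbound := (div_le_half_sub_mul_of_le hN2.le hcrit_le).trans hE
  rwa [one_div_mul_eq_div, mul_div_assoc', div_le_div_iff_of_pos_right (by linarith)] at hbound
end

section
/- Suppose u ∈ Ḣ¹(ℝ^N) satisfies ‖∇u‖² < ‖∇W‖² and E(u) ≤ (1−δ₀)E(W) for some δ₀ > 0. Then there exists δ̄ = δ̄(δ₀, N) > 0 such that ∫|∇u|² − ∫|u|^{2*} ≥ δ̄ ∫|∇u|². -/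
/-!
With `M = C^{-N}` and `κ = 2/(N-2)`, the Sobolev inequality gives
`∫|u|^{2*} ≤ C^{2*} ‖∇u‖^{2*} = ‖∇u‖² (‖∇u‖²/M)^κ`. Below the threshold `‖∇u‖² < M` this is at most
`‖∇u‖²`, so `E(u) ≥ (1/2 - 1/2*) ‖∇u‖² = ‖∇u‖²/N`, and the energy bound traps `‖∇u‖²/M` in
`[0, 1 - δ₀]`. Feeding this back into the Sobolev bound gives
`∫|u|^{2*} ≤ (1 - δ₀)^κ ‖∇u‖²`, i.e. `δ̄ = 1 - (1 - δ₀)^κ` (with `δ₀` capped at `1`).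
-/

open MeasureTheory

theorem le_mul_rpow_of_rpow_le {A B C e p : ℝ} (hA : 0 ≤ A) (hB : 0 ≤ B) (hC : 0 ≤ C) (hp : 0 < p)
    (hep : e * p = 1) (h : B ^ e ≤ C * A ^ ((1 : ℝ) / 2)) : B ≤ C ^ p * A ^ (p / 2) := by
  have := Real.rpow_le_rpow (Real.rpow_nonneg hB e) h hp.le
  rwa [← Real.rpow_mul hB, hep, Real.rpow_one, Real.mul_rpow hC (Real.rpow_nonneg hA _),
    ← Real.rpow_mul hA, one_div_mul_eq_div] at this

theorem rpow_mul_rpow_eq_mul_div_rpow {N A C : ℝ} (hN : 2 < N) (hA : 0 ≤ A) (hC : 0 < C) :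
    C ^ (2 * N / (N - 2)) * A ^ (2 * N / (N - 2) / 2) = A * (A / C ^ (-N)) ^ (2 / (N - 2)) := by
  have hN2 : N - 2 ≠ 0 := by linarith
  have hsplit : 2 * N / (N - 2) / 2 = 2 / (N - 2) + 1 := by field_simp; ring
  have hexp : -N * (2 / (N - 2)) = -(2 * N / (N - 2)) := by ring
  rw [hsplit, Real.rpow_add' hA (by positivity), Real.rpow_one,
    Real.div_rpow hA (Real.rpow_nonneg hC.le _), ← Real.rpow_mul hC.le, hexp,
    Real.rpow_neg hC.le, div_inv_eq_mul]
  ring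

theorem le_of_energy_le {N A B M δ₀ : ℝ} (hN : 2 < N) (hBA : B ≤ A)
    (hE : 1 / 2 * A - (N - 2) / (2 * N) * B ≤ (1 - δ₀) * (1 / N * M)) : A ≤ (1 - δ₀) * M := by
  have hN0 : 0 < N := by linarith
  have he : 0 ≤ (N - 2) / (2 * N) := div_nonneg (by linarith) (by positivity)
  have hcoef : 1 / 2 * A - (N - 2) / (2 * N) * A = 1 / N * A := by field_simp; ring
  have : 1 / N * A ≤ 1 / N * ((1 - δ₀) * M) := by
    nlinarith [mul_le_mul_of_nonneg_left hBA he]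
  exact le_of_mul_le_mul_left this (by positivity)

theorem sub_ge_mul_of_le_mul_div_rpow {A B M κ δ₀ : ℝ} (hA : 0 ≤ A) (hM : 0 < M) (hκ : 0 ≤ κ)
    (hB : B ≤ A * (A / M) ^ κ) (hAM : A ≤ (1 - δ₀) * M) :
    A - B ≥ (1 - (1 - min δ₀ 1) ^ κ) * A := by
  have hratio : A / M ≤ 1 - min δ₀ 1 := by
    rw [div_le_iff₀ hM]
    exact hAM.trans (mul_le_mul_of_nonneg_right (by linarith [min_le_left δ₀ 1]) hM.le)
  have := Real.rpow_le_rpow (div_nonneg hA hM.le) hratio hκ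
  nlinarith [mul_le_mul_of_nonneg_left this hA]

/-- If `u ∈ Ḣ¹(ℝ^N)` satisfies the Sobolev inequality with best constant `C`,
`‖∇u‖² < ‖∇W‖² = C^{-N}` and `E(u) ≤ (1−δ₀)E(W) = (1−δ₀)(1/N)C^{-N}`, then there exists
`δ̄ = δ̄(δ₀, N) > 0` such that `∫|∇u|² − ∫|u|^{2*} ≥ δ̄ ∫|∇u|²`. -/
theorem stmt6 (N : ℕ) (hN : 3 ≤ N) (C : ℝ) (hC : 0 < C) (δ₀ : ℝ) (hδ₀ : 0 < δ₀) :
    ∃ δb > (0 : ℝ), ∀ u : EuclideanSpace ℝ (Fin N) → ℝ,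
      (∫ x, |u x| ^ ((2 * (N : ℝ)) / ((N : ℝ) - 2))) ^ (((N : ℝ) - 2) / (2 * (N : ℝ)))
          ≤ C * (∫ x, ‖gradient u x‖ ^ 2) ^ ((1 : ℝ) / 2) →
      (∫ x, ‖gradient u x‖ ^ 2) < C ^ (-(N : ℝ)) →
      (1 / 2) * (∫ x, ‖gradient u x‖ ^ 2)
          - (((N : ℝ) - 2) / (2 * (N : ℝ))) * (∫ x, |u x| ^ ((2 * (N : ℝ)) / ((N : ℝ) - 2)))
        ≤ (1 - δ₀) * ((1 / (N : ℝ)) * C ^ (-(N : ℝ))) →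
      (∫ x, ‖gradient u x‖ ^ 2) - (∫ x, |u x| ^ ((2 * (N : ℝ)) / ((N : ℝ) - 2)))
        ≥ δb * (∫ x, ‖gradient u x‖ ^ 2) := by
  have hN2 : (2 : ℝ) < N := by exact_mod_cast hN
  have hκ : (0 : ℝ) < 2 / (N - 2) := div_pos two_pos (by linarith)
  have hM : 0 < C ^ (-(N : ℝ)) := Real.rpow_pos_of_pos hC _
  refine ⟨1 - (1 - min δ₀ 1) ^ (2 / ((N : ℝ) - 2)), ?_, fun u hSob hbelow hE => ?_⟩
  · have : (1 - min δ₀ 1) ^ (2 / ((N : ℝ) - 2)) < 1 :=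
      Real.rpow_lt_one (by linarith [min_le_right δ₀ 1]) (by linarith [lt_min hδ₀ one_pos]) hκ
    linarith
  set A := ∫ x, ‖gradient u x‖ ^ 2
  set B := ∫ x, |u x| ^ ((2 * (N : ℝ)) / ((N : ℝ) - 2))
  have hA : 0 ≤ A := integral_nonneg fun _ => by positivity
  have hB : 0 ≤ B := integral_nonneg fun _ => by positivity
  have hSobolev : B ≤ A * (A / C ^ (-(N : ℝ))) ^ (2 / ((N : ℝ) - 2)) := by
    rw [← rpow_mul_rpow_eq_mul_div_rpow hN2 hA hC]
    exact le_mul_rpow_of_rpow_le hA hB hC.le (by positivity)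
      (by field_simp [show (N : ℝ) - 2 ≠ 0 by linarith]) hSob
  have hBA : B ≤ A := hSobolev.trans <| mul_le_of_le_one_right hA <|
    Real.rpow_le_one (div_nonneg hA hM.le) ((div_le_one hM).2 hbelow.le) hκ.le
  exact sub_ge_mul_of_le_mul_div_rpow hA hM hκ.le hSobolev (le_of_energy_le hN2 hBA hE)
end

section
/- If u ∈ Ḣ¹(ℝ^N) satisfies ∫|∇u|² < ∫|∇W|², then E(u) ≥ 0. -/
open MeasureTheory

namespace Real

/-- With `A = ∫|u|^{2n/(n-2)}` and `T = ∫|∇u|²`, `hSob` is the Sobolev inequality with constant `C`. -/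
lemma le_of_rpow_le_mul_sqrt_of_le_rpow_neg {n C T A : ℝ} (hn : 2 < n) (hC : 0 < C)
    (hT : 0 ≤ T) (hA : 0 ≤ A) (hSob : A ^ ((n - 2) / (2 * n)) ≤ C * T ^ ((1 : ℝ) / 2))
    (hcrit : T ≤ C ^ (-n)) : A ≤ T := by
  have hn2 : 0 < n - 2 := by linarith
  set p := 2 * n / (n - 2) with hp_def
  have hp : 0 < p := by positivity
  have h_raised : A ≤ (C * T ^ ((1 : ℝ) / 2)) ^ p := by
    refine (rpow_inv_le_iff_of_pos hA (by positivity) hp).1 ?_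
    rwa [hp_def, inv_div]
  -- `p / 2 = 2 / (n - 2) + 1`, and the factor `T ^ (2 / (n - 2))` is at most `C ^ (-p)`.
  have h_split : (C * T ^ ((1 : ℝ) / 2)) ^ p = C ^ p * T ^ (2 / (n - 2)) * T := by
    rw [mul_rpow hC.le (rpow_nonneg hT _), ← rpow_mul hT, mul_assoc,
      ← rpow_add_one' hT (by positivity)]
    congr 2
    rw [hp_def]
    field_simp
    ring
  have h_small : C ^ p * T ^ (2 / (n - 2)) ≤ 1 := by
    have h : T ^ (2 / (n - 2)) ≤ C ^ (-p) :=
      calc T ^ (2 / (n - 2)) ≤ (C ^ (-n)) ^ (2 / (n - 2)) :=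
            rpow_le_rpow hT hcrit (by positivity)
        _ = C ^ (-p) := by rw [← rpow_mul hC.le, hp_def]; ring_nf
    calc C ^ p * T ^ (2 / (n - 2)) ≤ C ^ p * C ^ (-p) := by gcongr
      _ = 1 := by rw [← rpow_add hC, add_neg_cancel, rpow_zero]
  calc A ≤ C ^ p * T ^ (2 / (n - 2)) * T := h_raised.trans_eq h_split
    _ ≤ 1 * T := by gcongr
    _ = T := one_mul T

end Real

/-- If `u ∈ Ḣ¹(ℝ^N)` satisfies the Sobolev inequality with best constant `C` and
`∫|∇u|² < ∫|∇W|² = C^{-N}`, then `E(u) ≥ 0`. -/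
theorem stmt7 (N : ℕ) (hN : 3 ≤ N) (C : ℝ) (hC : 0 < C)
    (u : EuclideanSpace ℝ (Fin N) → ℝ)
    (hSob : (∫ x, |u x| ^ ((2 * (N : ℝ)) / ((N : ℝ) - 2))) ^ (((N : ℝ) - 2) / (2 * (N : ℝ)))
        ≤ C * (∫ x, ‖gradient u x‖ ^ 2) ^ ((1 : ℝ) / 2))
    (hgrad : (∫ x, ‖gradient u x‖ ^ 2) < C ^ (-(N : ℝ))) :
    0 ≤ (1 / 2) * (∫ x, ‖gradient u x‖ ^ 2)
        - (((N : ℝ) - 2) / (2 * (N : ℝ))) * (∫ x, |u x| ^ ((2 * (N : ℝ)) / ((N : ℝ) - 2))) := by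
  set T := ∫ x, ‖gradient u x‖ ^ 2
  set A := ∫ x, |u x| ^ ((2 * (N : ℝ)) / ((N : ℝ) - 2))
  have hN' : (2 : ℝ) < N := by exact_mod_cast hN
  have hT : 0 ≤ T := integral_nonneg fun _ => by positivity
  have hA : 0 ≤ A := integral_nonneg fun _ => by positivity
  have hAT : A ≤ T := Real.le_of_rpow_le_mul_sqrt_of_le_rpow_neg hN' hC hT hA hSob hgrad.le
  have hθ : ((N : ℝ) - 2) / (2 * N) ≤ 1 / 2 := by
    rw [div_le_div_iff₀ (by positivity) two_pos]
    linarith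
  have hθ₀ : 0 ≤ ((N : ℝ) - 2) / (2 * N) := div_nonneg (by linarith) (by positivity)
  calc 0 = 1 / 2 * T - 1 / 2 * T := (sub_self _).symm
    _ ≤ 1 / 2 * T - ((N : ℝ) - 2) / (2 * N) * A := by gcongr
end

section
/- If u ∈ Ḣ¹(ℝ^N) satisfies ‖∇u‖² < ‖∇W‖² and E(u) ≤ (1−δ₀)E(W) for some δ₀ ∈ (0,1), then there are constants c₁(δ₀), c₂ > 0 with c₁(δ₀)∫|∇u|² ≤ E(u) ≤ c₂∫|∇u|²; in particular E(u) ≥ 0 and E(u) is comparable to ∫|∇u|². -/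
/-!
Below the threshold `‖∇u‖² < ‖∇W‖² = C^{-N}`, the Sobolev inequality
`‖u‖_{2*} ≤ C ‖∇u‖₂` forces `∫|u|^{2*} ≤ ∫|∇u|²`: raising it to the power `2*` gives
`∫|u|^{2*} ≤ C^{2*} (∫|∇u|²)^{2*/2}`, and the excess factor `(∫|∇u|²)^{2/(N-2)}` is at most
`C^{-2*}`. Hence `E(u) ≥ (1/2 - 1/2*) ∫|∇u|² = (1/N) ∫|∇u|²`, while `E(u) ≤ ½ ∫|∇u|²` trivially.
-/

open MeasureTheory

lemma le_of_sobolev_of_le_threshold {N C T P : ℝ} (hN : 2 < N) (hC : 0 < C) (hT : 0 ≤ T)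
    (hP : 0 ≤ P) (hSob : P ^ ((N - 2) / (2 * N)) ≤ C * T ^ ((1 : ℝ) / 2))
    (hT' : T ≤ C ^ (-N)) : P ≤ T := by
  have hN2 : 0 < N - 2 := by linarith
  set p := 2 * N / (N - 2) with hp
  have hp_pos : 0 < p := by positivity
  have hθp : (N - 2) / (2 * N) * p = 1 := by rw [hp]; field_simp
  have hp_half : 1 / 2 * p = 2 / (N - 2) + 1 := by rw [hp]; field_simp; ring
  have hCp : C ^ p * (C ^ (-N)) ^ (2 / (N - 2)) = 1 := by
    rw [← Real.rpow_mul hC.le, ← Real.rpow_add hC]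
    convert Real.rpow_zero C using 2
    rw [hp]
    field_simp
    ring
  calc P = (P ^ ((N - 2) / (2 * N))) ^ p := by rw [← Real.rpow_mul hP, hθp, Real.rpow_one]
    _ ≤ (C * T ^ ((1 : ℝ) / 2)) ^ p := by gcongr
    _ = C ^ p * T ^ (2 / (N - 2)) * T := by
      rw [Real.mul_rpow hC.le (by positivity), ← Real.rpow_mul hT, hp_half,
        Real.rpow_add' hT (by positivity), Real.rpow_one, mul_assoc]
    _ ≤ C ^ p * (C ^ (-N)) ^ (2 / (N - 2)) * T := by gcongr
    _ = T := by rw [hCp, one_mul]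

lemma energy_bounds_of_le {N T P : ℝ} (hN : 2 < N) (hP : 0 ≤ P) (hPT : P ≤ T) :
    1 / N * T ≤ 1 / 2 * T - (N - 2) / (2 * N) * P ∧
      1 / 2 * T - (N - 2) / (2 * N) * P ≤ 1 / 2 * T := by
  have hθ : 0 ≤ (N - 2) / (2 * N) := div_nonneg (by linarith) (by linarith)
  have hcoeff : 1 / 2 - (N - 2) / (2 * N) = 1 / N := by field_simp; ring
  constructor
  · nlinarith [mul_le_mul_of_nonneg_left hPT hθ]
  · nlinarith [mul_nonneg hθ hP]

theorem stmt8_general (N : ℕ) (hN : 3 ≤ N) (C : ℝ) (hC : 0 < C) (δ₀ : ℝ) :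
    ∃ c₁ > (0 : ℝ), ∃ c₂ > (0 : ℝ), ∀ u : EuclideanSpace ℝ (Fin N) → ℝ,
      (∫ x, |u x| ^ ((2 * (N : ℝ)) / ((N : ℝ) - 2))) ^ (((N : ℝ) - 2) / (2 * (N : ℝ)))
          ≤ C * (∫ x, ‖gradient u x‖ ^ 2) ^ ((1 : ℝ) / 2) →
      (∫ x, ‖gradient u x‖ ^ 2) < C ^ (-(N : ℝ)) →
      (1 / 2) * (∫ x, ‖gradient u x‖ ^ 2)
          - (((N : ℝ) - 2) / (2 * (N : ℝ))) * (∫ x, |u x| ^ ((2 * (N : ℝ)) / ((N : ℝ) - 2)))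
        ≤ (1 - δ₀) * ((1 / (N : ℝ)) * C ^ (-(N : ℝ))) →
      (c₁ * (∫ x, ‖gradient u x‖ ^ 2)
          ≤ (1 / 2) * (∫ x, ‖gradient u x‖ ^ 2)
            - (((N : ℝ) - 2) / (2 * (N : ℝ))) * (∫ x, |u x| ^ ((2 * (N : ℝ)) / ((N : ℝ) - 2)))
        ∧ (1 / 2) * (∫ x, ‖gradient u x‖ ^ 2)
            - (((N : ℝ) - 2) / (2 * (N : ℝ))) * (∫ x, |u x| ^ ((2 * (N : ℝ)) / ((N : ℝ) - 2)))
          ≤ c₂ * (∫ x, ‖gradient u x‖ ^ 2)) := by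
  have hN2 : (2 : ℝ) < N := by exact_mod_cast hN
  refine ⟨1 / N, by positivity, 1 / 2, by norm_num, fun u hSob hT _ => ?_⟩
  have hgrad : 0 ≤ ∫ x, ‖gradient u x‖ ^ 2 := integral_nonneg fun x => by positivity
  have hLp : 0 ≤ ∫ x, |u x| ^ ((2 * (N : ℝ)) / ((N : ℝ) - 2)) :=
    integral_nonneg fun x => by positivity
  exact energy_bounds_of_le hN2 hLp
    (le_of_sobolev_of_le_threshold hN2 hC hgrad hLp hSob hT.le)

/-- If `u ∈ Ḣ¹(ℝ^N)` satisfies the Sobolev inequality with best constant `C`,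
`‖∇u‖² < ‖∇W‖² = C^{-N}` and `E(u) ≤ (1−δ₀)E(W)` for some `δ₀ ∈ (0,1)`, then there are
constants `c₁(δ₀), c₂ > 0` with `c₁ ∫|∇u|² ≤ E(u) ≤ c₂ ∫|∇u|²`. -/
theorem stmt8 (N : ℕ) (hN : 3 ≤ N) (C : ℝ) (hC : 0 < C) (δ₀ : ℝ) (hδ₀ : 0 < δ₀)
    (hδ₀' : δ₀ < 1) :
    ∃ c₁ > (0 : ℝ), ∃ c₂ > (0 : ℝ), ∀ u : EuclideanSpace ℝ (Fin N) → ℝ,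
      (∫ x, |u x| ^ ((2 * (N : ℝ)) / ((N : ℝ) - 2))) ^ (((N : ℝ) - 2) / (2 * (N : ℝ)))
          ≤ C * (∫ x, ‖gradient u x‖ ^ 2) ^ ((1 : ℝ) / 2) →
      (∫ x, ‖gradient u x‖ ^ 2) < C ^ (-(N : ℝ)) →
      (1 / 2) * (∫ x, ‖gradient u x‖ ^ 2)
          - (((N : ℝ) - 2) / (2 * (N : ℝ))) * (∫ x, |u x| ^ ((2 * (N : ℝ)) / ((N : ℝ) - 2)))
        ≤ (1 - δ₀) * ((1 / (N : ℝ)) * C ^ (-(N : ℝ))) →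
      (c₁ * (∫ x, ‖gradient u x‖ ^ 2)
          ≤ (1 / 2) * (∫ x, ‖gradient u x‖ ^ 2)
            - (((N : ℝ) - 2) / (2 * (N : ℝ))) * (∫ x, |u x| ^ ((2 * (N : ℝ)) / ((N : ℝ) - 2)))
        ∧ (1 / 2) * (∫ x, ‖gradient u x‖ ^ 2)
            - (((N : ℝ) - 2) / (2 * (N : ℝ))) * (∫ x, |u x| ^ ((2 * (N : ℝ)) / ((N : ℝ) - 2)))
          ≤ c₂ * (∫ x, ‖gradient u x‖ ^ 2)) :=
  stmt8_general N hN C hC δ₀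
end

section
/- Suppose u ∈ Ḣ¹(ℝ^N) satisfies E(u) ≤ (1−δ₀)E(W) and ∫|∇u|² > ∫|∇W|² for some δ₀ > 0. Then there exists δ̄ = δ̄(δ₀, N) > 0 such that ∫|∇u|² > (1+δ̄)∫|∇W|². -/
open MeasureTheory

/-!
Write `y = ∫|∇u|²`, `L = ∫|u|^{2*}`. The Sobolev inequality gives `L ≤ C^{2*} y^{2*/2}`, so the
energy bound turns into `φ(t) ≤ (1 - δ₀)/N` for the normalised quantity `t = C^N y`, where
`φ(t) = t/2 - t^{2*/2}/2*`. Since `φ(1) = 1/N = E(W) C^N`, continuity of `φ` at `1` keeps every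
`t > 1` with `φ(t) ≤ (1 - δ₀)/N` a fixed distance away from `1`, depending only on `δ₀` and `N`.
-/

noncomputable section

namespace SobolevEnergy

def profile (N t : ℝ) : ℝ := t / 2 - (N - 2) / (2 * N) * t ^ (N / (N - 2))

theorem profile_one {N : ℝ} (hN : N ≠ 0) : profile N 1 = 1 / N := by
  simp only [profile, Real.one_rpow]
  field_simp
  ring

theorem continuousAt_profile_one (N : ℝ) : ContinuousAt (profile N) 1 :=
  (continuousAt_id.div_const 2).sub
    (continuousAt_const.mul (Real.continuousAt_rpow_const 1 _ (Or.inl one_ne_zero)))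

theorem exists_add_lt_of_profile_le {N δ₀ : ℝ} (hN : 0 < N) (hδ₀ : 0 < δ₀) :
    ∃ η > 0, ∀ t, 1 < t → profile N t ≤ (1 - δ₀) / N → 1 + η < t := by
  have hlt : (1 - δ₀) / N < profile N 1 := by
    rw [profile_one hN.ne', div_lt_div_iff_of_pos_right hN]
    linarith
  obtain ⟨ε, hε, hball⟩ :=
    Metric.eventually_nhds_iff.1 ((continuousAt_profile_one N).eventually (lt_mem_nhds hlt))
  refine ⟨ε / 2, half_pos hε, fun t ht hφ => ?_⟩
  by_contra! h
  refine (hball ?_).not_ge hφ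
  rw [Real.dist_eq, abs_lt]
  constructor <;> linarith

theorem profile_mul_rpow {N C y : ℝ} (hN : N - 2 ≠ 0) (hC : 0 < C) (hy : 0 ≤ y) :
    profile N (y * C ^ N) =
      C ^ N * (y / 2 - (N - 2) / (2 * N) * (C ^ (2 * N / (N - 2)) * y ^ (N / (N - 2)))) := by
  have hexp : N * (N / (N - 2)) = N + 2 * N / (N - 2) := by
    field_simp
    ring
  rw [profile, Real.mul_rpow hy (Real.rpow_nonneg hC.le N), ← Real.rpow_mul hC.le, hexp,
    Real.rpow_add hC]
  ring

end SobolevEnergy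

theorem Real.le_mul_rpow_of_rpow_le_mul_rpow {L C y a b : ℝ} (hL : 0 ≤ L) (hC : 0 ≤ C)
    (hy : 0 ≤ y) (ha : 0 < a) (h : L ^ a ≤ C * y ^ b) :
    L ≤ C ^ a⁻¹ * y ^ (b * a⁻¹) := by
  rw [Real.rpow_mul hy, ← Real.mul_rpow hC (Real.rpow_nonneg hy b)]
  exact (Real.le_rpow_inv_iff_of_pos hL (by positivity) ha).2 h

end

open SobolevEnergy in
/-- If `u ∈ Ḣ¹(ℝ^N)` satisfies the Sobolev inequality with best constant `C`,
`E(u) ≤ (1−δ₀)E(W)` and `∫|∇u|² > ∫|∇W|² = C^{-N}`, then there exists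
`δ̄ = δ̄(δ₀, N) > 0` such that `∫|∇u|² > (1+δ̄)∫|∇W|²`. -/
theorem stmt9 (N : ℕ) (hN : 3 ≤ N) (C : ℝ) (hC : 0 < C) (δ₀ : ℝ) (hδ₀ : 0 < δ₀) :
    ∃ δb > (0 : ℝ), ∀ u : EuclideanSpace ℝ (Fin N) → ℝ,
      (∫ x, |u x| ^ ((2 * (N : ℝ)) / ((N : ℝ) - 2))) ^ (((N : ℝ) - 2) / (2 * (N : ℝ)))
          ≤ C * (∫ x, ‖gradient u x‖ ^ 2) ^ ((1 : ℝ) / 2) →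
      (1 / 2) * (∫ x, ‖gradient u x‖ ^ 2)
          - (((N : ℝ) - 2) / (2 * (N : ℝ))) * (∫ x, |u x| ^ ((2 * (N : ℝ)) / ((N : ℝ) - 2)))
        ≤ (1 - δ₀) * ((1 / (N : ℝ)) * C ^ (-(N : ℝ))) →
      (∫ x, ‖gradient u x‖ ^ 2) > C ^ (-(N : ℝ)) →
      (∫ x, ‖gradient u x‖ ^ 2) > (1 + δb) * C ^ (-(N : ℝ)) := by
  have hN2 : (0 : ℝ) < N - 2 := by
    have : (3 : ℝ) ≤ N := by exact_mod_cast hN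
    linarith
  obtain ⟨η, hη, hgap⟩ := exists_add_lt_of_profile_le (N := N) (by linarith) hδ₀
  refine ⟨η, hη, fun u hSob hE hgt => ?_⟩
  set y := ∫ x, ‖gradient u x‖ ^ 2
  set L := ∫ x, |u x| ^ ((2 * (N : ℝ)) / ((N : ℝ) - 2))
  have hy : 0 ≤ y := integral_nonneg fun x => by positivity
  have hCN : C ^ (N : ℝ) * C ^ (-(N : ℝ)) = 1 := by
    rw [← Real.rpow_add hC, add_neg_cancel, Real.rpow_zero]
  have hL : L ≤ C ^ (2 * (N : ℝ) / (N - 2)) * y ^ ((N : ℝ) / (N - 2)) := by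
    convert Real.le_mul_rpow_of_rpow_le_mul_rpow (integral_nonneg fun x => by positivity)
      hC.le hy (by positivity) hSob using 3 <;> field_simp
  have hprofile : profile N (y * C ^ (N : ℝ)) ≤ (1 - δ₀) / N := by
    rw [profile_mul_rpow hN2.ne' hC hy]
    calc _ ≤ C ^ (N : ℝ) * ((1 - δ₀) * ((1 / (N : ℝ)) * C ^ (-(N : ℝ)))) := by
          gcongr
          nlinarith [mul_le_mul_of_nonneg_left hL (by positivity : (0 : ℝ) ≤ (N - 2) / (2 * N))]
      _ = (1 - δ₀) / N * (C ^ (N : ℝ) * C ^ (-(N : ℝ))) := by ring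
      _ = (1 - δ₀) / N := by rw [hCN, mul_one]
  have ht : 1 < y * C ^ (N : ℝ) := by
    rw [← hCN, mul_comm (C ^ _)]
    gcongr
  have key := hgap _ ht hprofile
  calc (1 + η) * C ^ (-(N : ℝ)) < y * C ^ (N : ℝ) * C ^ (-(N : ℝ)) := by gcongr
    _ = y := by rw [mul_assoc, hCN, mul_one]
end

section
/- Suppose u ∈ Ḣ¹(ℝ^N) satisfies E(u) < E(W) and ∫|∇u|² ≥ (1+δ̄)∫|∇W|² for some δ̄ > 0. Then ∫|∇u|² − ∫|u|^{2*} ≤ 2* E(u) − (2/(N−2))(1+δ̄)∫|∇W|² ≤ −2δ̄/((N−2)C_N^N). -/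
open MeasureTheory

/-- If `u ∈ Ḣ¹(ℝ^N)` satisfies `E(u) < E(W)` and `∫|∇u|² ≥ (1+δ̄)∫|∇W|²` for some `δ̄ > 0`,
then `∫|∇u|² − ∫|u|^{2*} ≤ 2* E(u) − (2/(N−2))(1+δ̄)∫|∇W|² ≤ −2δ̄/((N−2)C_N^N)`. -/
theorem stmt10 (N : ℕ) (hN : 3 ≤ N) (C : ℝ) (hC : 0 < C) (δb : ℝ) (hδb : 0 < δb)
    (u : EuclideanSpace ℝ (Fin N) → ℝ) (G B : ℝ)
    (hG : G = ∫ x, ‖gradient u x‖ ^ 2)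
    (hB : B = ∫ x, |u x| ^ ((2 * (N : ℝ)) / ((N : ℝ) - 2)))
    (hE : (1 / 2) * G - (((N : ℝ) - 2) / (2 * (N : ℝ))) * B < (1 / (N : ℝ)) * C ^ (-(N : ℝ)))
    (hgrad : G ≥ (1 + δb) * C ^ (-(N : ℝ))) :
    G - B ≤ ((2 * (N : ℝ)) / ((N : ℝ) - 2))
          * ((1 / 2) * G - (((N : ℝ) - 2) / (2 * (N : ℝ))) * B)
        - (2 / ((N : ℝ) - 2)) * ((1 + δb) * C ^ (-(N : ℝ)))
      ∧ ((2 * (N : ℝ)) / ((N : ℝ) - 2))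
          * ((1 / 2) * G - (((N : ℝ) - 2) / (2 * (N : ℝ))) * B)
        - (2 / ((N : ℝ) - 2)) * ((1 + δb) * C ^ (-(N : ℝ)))
      ≤ -(2 * δb) / (((N : ℝ) - 2) * C ^ (N : ℝ)) := by
  have hn : (3 : ℝ) ≤ (N : ℝ) := by exact_mod_cast hN
  have hn2 : (0 : ℝ) < (N : ℝ) - 2 := by linarith
  have hn0 : (0 : ℝ) < (N : ℝ) := by linarith
  have hCp : (0 : ℝ) < C ^ ((N : ℝ)) := Real.rpow_pos_of_pos hC _
  have hneg : C ^ (-(N : ℝ)) = (C ^ ((N : ℝ)))⁻¹ := Real.rpow_neg hC.le _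
  rw [hneg] at hE hgrad ⊢
  constructor
  · have h1 : ((2 * (N : ℝ)) / ((N : ℝ) - 2))
          * ((1 / 2) * G - (((N : ℝ) - 2) / (2 * (N : ℝ))) * B)
        = ((N : ℝ) / ((N : ℝ) - 2)) * G - B := by
      field_simp
    rw [h1]
    have h2 : ((N : ℝ) / ((N : ℝ) - 2)) * G = G + (2 / ((N : ℝ) - 2)) * G := by
      field_simp; ring
    rw [h2]
    have := mul_le_mul_of_nonneg_left hgrad (by positivity : (0:ℝ) ≤ 2 / ((N : ℝ) - 2))
    linarith
  · have hE' := mul_lt_mul_of_pos_left hE (by positivity : (0:ℝ) < (2 * (N : ℝ)) / ((N : ℝ) - 2))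
    have h3 : ((2 * (N : ℝ)) / ((N : ℝ) - 2)) * ((1 / (N : ℝ)) * (C ^ ((N : ℝ)))⁻¹)
        = (2 / ((N : ℝ) - 2)) * (C ^ ((N : ℝ)))⁻¹ := by
      field_simp
    rw [h3] at hE'
    have h4 : -(2 * δb) / (((N : ℝ) - 2) * C ^ ((N : ℝ)))
        = (2 / ((N : ℝ) - 2)) * (C ^ ((N : ℝ)))⁻¹
          - (2 / ((N : ℝ) - 2)) * ((1 + δb) * (C ^ ((N : ℝ)))⁻¹) := by
      field_simp; ring
    rw [h4]; linarith
end
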